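/- arXiv:1503.00871 — 4 statements merged into one kernel-verified Lean document; each statement's English description precedes it below -/
import Mathlib

section
/- In the commutative ring R, the determinant of the 4×4 matrix M equals ((A₁+𝛌)(A₃+𝛌) − (λ₁²−λ₂²))·((A₂+𝛌)(A₄+𝛌) − (λ₁²−λ₂²)) − 4λ₂²(T+𝛌)². -/
/-!
Write the diagonal of `M` as `a, b, c, d`. In the block form `M = !![P, -λ₁ • 1; -λ₁ • 1, S]`
with `P = !![a, -λ₂; -λ₂, b]` and `S = !![c, -λ₂; -λ₂, d]` the off-diagonal blocks are scalar, so
`det M = det (P * S - λ₁² • 1)`, which expands to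
`(a c + λ₂² - λ₁²)(b d + λ₂² - λ₁²) - λ₂² (a + d)(b + c)`.
For `M` the two sums `a + d` and `b + c` both equal `2 (T + 𝛌)`, because `A₁ + A₄ = A₂ + A₃ = 2 T`.
-/

theorem det_fin_four_of_scalar_offdiag_blocks {R : Type*} [CommRing R] (a b c d l m : R) :
    (!![a, -m, -l, 0;
        -m, b, 0, -l;
        -l, 0, c, -m;
        0, -l, -m, d] : Matrix (Fin 4) (Fin 4) R).det =
      (a * c - (l ^ 2 - m ^ 2)) * (b * d - (l ^ 2 - m ^ 2)) - m ^ 2 * (a + d) * (b + c) := by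
  simp [Matrix.det_succ_row_zero, Fin.sum_univ_succ, Fin.succAbove]
  ring

/-- The determinant of the 4×4 operator matrix `M = 𝔇₂ + Λ₂` of the Kolmogorov system for the
sum and difference of two independent telegraph processes equals
`((A₁+𝛌)(A₃+𝛌) − (λ₁²−λ₂²))·((A₂+𝛌)(A₄+𝛌) − (λ₁²−λ₂²)) − 4λ₂²(T+𝛌)²`.
Here `l₁, l₂` play the roles of the Poisson rates `λ₁, λ₂`. -/
theorem stmt_4 {R : Type*} [CommRing R] (T X c₁ c₂ l₁ l₂ : R) :
    let lam := l₁ + l₂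
    let A₁ := T - (c₁ + c₂) * X
    let A₂ := T - (c₁ - c₂) * X
    let A₃ := T + (c₁ - c₂) * X
    let A₄ := T + (c₁ + c₂) * X
    let M : Matrix (Fin 4) (Fin 4) R :=
      !![A₁ + lam, -l₂,      -l₁,      0;
         -l₂,      A₂ + lam, 0,        -l₁;
         -l₁,      0,        A₃ + lam, -l₂;
         0,        -l₁,      -l₂,      A₄ + lam]
    M.det = ((A₁ + lam) * (A₃ + lam) - (l₁ ^ 2 - l₂ ^ 2)) *
              ((A₂ + lam) * (A₄ + lam) - (l₁ ^ 2 - l₂ ^ 2)) -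
            4 * l₂ ^ 2 * (T + lam) ^ 2 := by
  intro lam A₁ A₂ A₃ A₄ M
  have h₁₄ : (A₁ + lam) + (A₄ + lam) = 2 * (T + lam) := by ring
  have h₂₃ : (A₂ + lam) + (A₃ + lam) = 2 * (T + lam) := by ring
  rw [det_fin_four_of_scalar_offdiag_blocks, h₁₄, h₂₃]
  ring
end

section
/- In the commutative ring R, the determinant of the 4×4 matrix M equals (T+𝛌)²·(T² + 2𝛌T − 2(c₁²+c₂²)X² − (λ₁−λ₂)²) + ((c₁²−c₂²)X² + (λ₁²−λ₂²))². (This is the governing operator of order 4 for the transition probability densities of the sum and difference of two independent telegraph processes with arbitrary parameters.) -/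
/-! Both processes flip independently, so `M` has the block shape `[[P, -λ₁ I], [-λ₁ I, Q]]` with
`P, Q` symmetric 2×2 blocks sharing the off-diagonal entry `-λ₂`. Since the off-diagonal blocks are
scalar, `det M = det (P Q - λ₁² I)`, which gives a closed form in the four diagonal entries; the
stated factorisation is then a polynomial identity. -/

theorem Matrix.det_fin_four_of_scalar_offDiag_blocks {R : Type*} [CommRing R] (a b c d l m : R) :
    !![a, -m, -l, 0;
       -m, b, 0, -l;
       -l, 0, c, -m;
       0, -l, -m, d].det =
      (a * b - m ^ 2) * (c * d - m ^ 2) - l ^ 2 * (a * c + b * d + 2 * m ^ 2) + l ^ 4 := by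
  rw [Matrix.det_succ_row_zero]
  simp [Fin.sum_univ_four, Matrix.det_fin_three, Fin.succAbove]
  ring

/-- The determinant of the 4×4 operator matrix `M = 𝔇₂ + Λ₂` equals the governing operator of
order 4 for the transition densities of the sum and difference of two independent telegraph
processes:
`(T+𝛌)²(T² + 2𝛌T − 2(c₁²+c₂²)X² − (λ₁−λ₂)²) + ((c₁²−c₂²)X² + (λ₁²−λ₂²))²`.
Here `l₁, l₂` play the roles of the Poisson rates `λ₁, λ₂`. -/
theorem stmt_5 {R : Type*} [CommRing R] (T X c₁ c₂ l₁ l₂ : R) :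
    let lam := l₁ + l₂
    let A₁ := T - (c₁ + c₂) * X
    let A₂ := T - (c₁ - c₂) * X
    let A₃ := T + (c₁ - c₂) * X
    let A₄ := T + (c₁ + c₂) * X
    let M : Matrix (Fin 4) (Fin 4) R :=
      !![A₁ + lam, -l₂,      -l₁,      0;
         -l₂,      A₂ + lam, 0,        -l₁;
         -l₁,      0,        A₃ + lam, -l₂;
         0,        -l₁,      -l₂,      A₄ + lam]
    M.det = (T + lam) ^ 2 *
              (T ^ 2 + 2 * lam * T - 2 * (c₁ ^ 2 + c₂ ^ 2) * X ^ 2 - (l₁ - l₂) ^ 2) +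
            ((c₁ ^ 2 - c₂ ^ 2) * X ^ 2 + (l₁ ^ 2 - l₂ ^ 2)) ^ 2 := by
  intro lam A₁ A₂ A₃ A₄ M
  rw [Matrix.det_fin_four_of_scalar_offDiag_blocks]
  ring
end

section
/- Let (λₘ), (cₘ) be sequences of positive reals satisfying Kac's scaling condition with constant ϱ > 0, let β ∈ ℝ be fixed and let t > 0. Then exp(−λₘt)·cosh(t√(λₘ² − cₘ²β²)) → (1/2)·exp(−ϱβ²t/2) and exp(−λₘt)·(λₘ/√(λₘ² − cₘ²β²))·sinh(t√(λₘ² − cₘ²β²)) → (1/2)·exp(−ϱβ²t/2) as m → ∞. -/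
/-!
Write `sₘ = √(λₘ² − cₘ²β²)`. Rationalising, `λₘ − sₘ = cₘ²β² / (λₘ + sₘ)
= (cₘ²β²/λₘ) / (1 + sₘ/λₘ)`, and `sₘ/λₘ → 1`, so `λₘ − sₘ → ϱβ²/2`. Expanding the
hyperbolic functions, `exp(−λₘt)·cosh(tsₘ) = (exp(−(λₘ − sₘ)t) + exp(−(λₘ + sₘ)t)) / 2`, whose first
term tends to `exp(−ϱβ²t/2)` and whose second vanishes because `λₘ + sₘ → ∞`; the `sinh` term is
the same up to the factor `λₘ/sₘ → 1`.
-/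

open Filter Topology Real

section SqrtSqSub

variable {ι : Type*} {l : Filter ι} {lam d : ι → ℝ} {a : ℝ}

lemma tendsto_div_sq_of_tendsto_div (hlam : Tendsto lam l atTop)
    (hd : Tendsto (fun i => d i / lam i) l (𝓝 a)) :
    Tendsto (fun i => d i / lam i ^ 2) l (𝓝 0) := by
  have h := hd.mul hlam.inv_tendsto_atTop
  rw [mul_zero] at h
  refine h.congr fun i => ?_
  simp only [Pi.inv_apply, sq, div_div, ← div_eq_mul_inv]

lemma eventually_pos_sq_sub (hlam : Tendsto lam l atTop)
    (hd : Tendsto (fun i => d i / lam i) l (𝓝 a)) :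
    ∀ᶠ i in l, 0 < lam i ^ 2 - d i := by
  filter_upwards [(tendsto_div_sq_of_tendsto_div hlam hd).eventually (eventually_lt_nhds one_pos),
    hlam.eventually_gt_atTop 0] with i hlt hpos
  rw [div_lt_one (by positivity)] at hlt
  linarith

lemma tendsto_sqrt_sq_sub_div_self (hlam : Tendsto lam l atTop)
    (hd : Tendsto (fun i => d i / lam i) l (𝓝 a)) :
    Tendsto (fun i => √(lam i ^ 2 - d i) / lam i) l (𝓝 1) := by
  have h := ((tendsto_const_nhds (x := (1 : ℝ))).sub
    (tendsto_div_sq_of_tendsto_div hlam hd)).sqrt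
  rw [sub_zero, sqrt_one] at h
  refine h.congr' ?_
  filter_upwards [hlam.eventually_gt_atTop 0] with i hpos
  rw [one_sub_div (by positivity), sqrt_div' _ (by positivity), sqrt_sq hpos.le]

lemma tendsto_self_sub_sqrt_sq_sub (hlam : Tendsto lam l atTop)
    (hd : Tendsto (fun i => d i / lam i) l (𝓝 a)) :
    Tendsto (fun i => lam i - √(lam i ^ 2 - d i)) l (𝓝 (a / 2)) := by
  have h := hd.div (tendsto_const_nhds.add (tendsto_sqrt_sq_sub_div_self hlam hd))
    (by norm_num : (1 : ℝ) + 1 ≠ 0)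
  rw [one_add_one_eq_two] at h
  refine h.congr' ?_
  filter_upwards [eventually_pos_sq_sub hlam hd, hlam.eventually_gt_atTop 0] with i hsq hpos
  have hs : √(lam i ^ 2 - d i) ^ 2 = lam i ^ 2 - d i := sq_sqrt hsq.le
  have hs_nonneg := sqrt_nonneg (lam i ^ 2 - d i)
  rw [Pi.div_apply, div_div, mul_add, mul_one, mul_div_cancel₀ _ hpos.ne',
    div_eq_iff (by positivity)]
  linear_combination hs

end SqrtSqSub

lemma exp_neg_mul_mul_cosh (x s t : ℝ) :
    exp (-x * t) * cosh (t * s) = (exp (-(x - s) * t) + exp (-(x + s) * t)) / 2 := by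
  rw [cosh_eq, mul_div_assoc', mul_add, ← exp_add, ← exp_add]
  ring_nf

lemma exp_neg_mul_mul_sinh (x s t : ℝ) :
    exp (-x * t) * sinh (t * s) = (exp (-(x - s) * t) - exp (-(x + s) * t)) / 2 := by
  rw [sinh_eq, mul_div_assoc', mul_sub, ← exp_add, ← exp_add]
  ring_nf

section HyperbolicDamping

variable {ι : Type*} {l : Filter ι} {x s : ι → ℝ} {b t : ℝ}

lemma tendsto_exp_neg_mul_of_tendsto_atTop (hx : Tendsto x l atTop) (ht : 0 < t) :
    Tendsto (fun i => exp (-x i * t)) l (𝓝 0) := by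
  simp only [neg_mul]
  exact tendsto_exp_atBot.comp (tendsto_neg_atTop_atBot.comp (hx.atTop_mul_const ht))

lemma tendsto_exp_neg_mul_of_tendsto (hx : Tendsto x l (𝓝 b)) :
    Tendsto (fun i => exp (-x i * t)) l (𝓝 (exp (-b * t))) :=
  (continuous_exp.tendsto _).comp (hx.neg.mul_const t)

lemma tendsto_exp_neg_mul_mul_cosh (hsub : Tendsto (fun i => x i - s i) l (𝓝 b))
    (hadd : Tendsto (fun i => x i + s i) l atTop) (ht : 0 < t) :
    Tendsto (fun i => exp (-x i * t) * cosh (t * s i)) l (𝓝 (exp (-b * t) / 2)) := by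
  have h := ((tendsto_exp_neg_mul_of_tendsto (t := t) hsub).add
    (tendsto_exp_neg_mul_of_tendsto_atTop hadd ht)).div_const 2
  rw [add_zero] at h
  simpa only [exp_neg_mul_mul_cosh] using h

lemma tendsto_exp_neg_mul_mul_div_mul_sinh (hsub : Tendsto (fun i => x i - s i) l (𝓝 b))
    (hadd : Tendsto (fun i => x i + s i) l atTop) (hdiv : Tendsto (fun i => x i / s i) l (𝓝 1))
    (ht : 0 < t) :
    Tendsto (fun i => exp (-x i * t) * (x i / s i) * sinh (t * s i)) l
      (𝓝 (exp (-b * t) / 2)) := by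
  have h := hdiv.mul (((tendsto_exp_neg_mul_of_tendsto (t := t) hsub).sub
    (tendsto_exp_neg_mul_of_tendsto_atTop hadd ht)).div_const 2)
  rw [sub_zero, one_mul] at h
  refine h.congr fun i => ?_
  rw [mul_right_comm, exp_neg_mul_mul_sinh, mul_comm]

end HyperbolicDamping

theorem stmt_15_general (lam c : ℕ → ℝ) (ϱ : ℝ)
    (hlam : Tendsto lam atTop atTop)
    (hKac : Tendsto (fun m => (c m) ^ 2 / lam m) atTop (nhds ϱ))
    (β t : ℝ) (ht : 0 < t) :
    Tendsto (fun m => Real.exp (-(lam m) * t) *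
        Real.cosh (t * Real.sqrt ((lam m) ^ 2 - (c m) ^ 2 * β ^ 2))) atTop
      (nhds ((1 / 2) * Real.exp (-(ϱ * β ^ 2 * t / 2)))) ∧
    Tendsto (fun m => Real.exp (-(lam m) * t) *
        (lam m / Real.sqrt ((lam m) ^ 2 - (c m) ^ 2 * β ^ 2)) *
        Real.sinh (t * Real.sqrt ((lam m) ^ 2 - (c m) ^ 2 * β ^ 2))) atTop
      (nhds ((1 / 2) * Real.exp (-(ϱ * β ^ 2 * t / 2)))) := by
  have hd : Tendsto (fun m => c m ^ 2 * β ^ 2 / lam m) atTop (𝓝 (ϱ * β ^ 2)) := by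
    simpa only [mul_div_right_comm] using hKac.mul_const (β ^ 2)
  have hsub := tendsto_self_sub_sqrt_sq_sub hlam hd
  have hadd := hlam.atTop_add_nonneg fun m => sqrt_nonneg (lam m ^ 2 - c m ^ 2 * β ^ 2)
  have hdiv := (tendsto_sqrt_sq_sub_div_self hlam hd).inv₀ one_ne_zero
  simp only [inv_div, inv_one] at hdiv
  have hlim : exp (-(ϱ * β ^ 2 / 2) * t) / 2 = 1 / 2 * exp (-(ϱ * β ^ 2 * t / 2)) := by
    ring_nf
  rw [← hlim]
  exact ⟨tendsto_exp_neg_mul_mul_cosh hsub hadd ht,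
    tendsto_exp_neg_mul_mul_div_mul_sinh hsub hadd hdiv ht⟩

/-- Under Kac's scaling condition (`λₘ → +∞`, `cₘ → +∞`, `cₘ²/λₘ → ϱ > 0`) for sequences of
positive reals, for fixed `β ∈ ℝ` and `t > 0`:
`exp(−λₘt)·cosh(t√(λₘ² − cₘ²β²)) → (1/2)·exp(−ϱβ²t/2)` and
`exp(−λₘt)·(λₘ/√(λₘ² − cₘ²β²))·sinh(t√(λₘ² − cₘ²β²)) → (1/2)·exp(−ϱβ²t/2)`. -/
theorem stmt_15 (lam c : ℕ → ℝ) (ϱ : ℝ) (hϱ : 0 < ϱ)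
    (hlam_pos : ∀ m, 0 < lam m) (hc_pos : ∀ m, 0 < c m)
    (hlam : Tendsto lam atTop atTop) (hc : Tendsto c atTop atTop)
    (hKac : Tendsto (fun m => (c m) ^ 2 / lam m) atTop (nhds ϱ))
    (β t : ℝ) (ht : 0 < t) :
    Tendsto (fun m => Real.exp (-(lam m) * t) *
        Real.cosh (t * Real.sqrt ((lam m) ^ 2 - (c m) ^ 2 * β ^ 2))) atTop
      (nhds ((1 / 2) * Real.exp (-(ϱ * β ^ 2 * t / 2)))) ∧
    Tendsto (fun m => Real.exp (-(lam m) * t) *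
        (lam m / Real.sqrt ((lam m) ^ 2 - (c m) ^ 2 * β ^ 2)) *
        Real.sinh (t * Real.sqrt ((lam m) ^ 2 - (c m) ^ 2 * β ^ 2))) atTop
      (nhds ((1 / 2) * Real.exp (-(ϱ * β ^ 2 * t / 2)))) :=
  stmt_15_general lam c ϱ hlam hKac β t ht
end

section
/- Let (λₘ), (cₘ) be sequences of positive reals satisfying Kac's scaling condition with constant ϱ > 0, let β ∈ ℝ be fixed and let t ≥ 0. Then exp(−λₘt)·H̃(λₘ, cₘ, β, t) → exp(−ϱβ²t/2) as m → ∞. (This is the Kac diffusion limit of the characteristic function of a single Goldstein–Kac telegraph process: it converges to the characteristic function of Brownian motion with diffusion coefficient ϱ.) -/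
open Filter

/-- `H̃(λ,c,ξ,t)`: for `|ξ| < λ/c` the hyperbolic branch
`cosh(t√(λ²−c²ξ²)) + (λ/√(λ²−c²ξ²))·sinh(t√(λ²−c²ξ²))`, otherwise the trigonometric branch
`cos(t√(c²ξ²−λ²)) + (λ/√(c²ξ²−λ²))·sin(t√(c²ξ²−λ²))`; `exp(−λt)·H̃(λ,c,ξ,t)` is the
characteristic function of the Goldstein–Kac telegraph process. -/
noncomputable def Htilde (l c ξ t : ℝ) : ℝ :=
  if |ξ| < l / c then
    Real.cosh (t * Real.sqrt (l ^ 2 - c ^ 2 * ξ ^ 2)) +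
      l / Real.sqrt (l ^ 2 - c ^ 2 * ξ ^ 2) *
        Real.sinh (t * Real.sqrt (l ^ 2 - c ^ 2 * ξ ^ 2))
  else
    Real.cos (t * Real.sqrt (c ^ 2 * ξ ^ 2 - l ^ 2)) +
      l / Real.sqrt (c ^ 2 * ξ ^ 2 - l ^ 2) *
        Real.sin (t * Real.sqrt (c ^ 2 * ξ ^ 2 - l ^ 2))

open Topology Real

/-! On the hyperbolic branch, with `a = √(λ² - c²β²)`,
`exp(-λt) H̃ = (1 + λ/a)/2 · exp(-(λ - a)t) + (1 - λ/a)/2 · exp(-(λ + a)t)`.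
Under Kac's scaling `λ/a → 1` and `λ - a = c²β²/(λ + a) → ϱβ²/2`, so the first term tends to
`exp(-ϱβ²t/2)`, while the second is a vanishing coefficient times a factor in `(0, 1]`. -/

lemma exp_neg_mul_mul_cosh_add_div_mul_sinh (l a t : ℝ) :
    exp (-l * t) * (cosh (t * a) + l / a * sinh (t * a)) =
      (1 + l / a) / 2 * exp (-((l - a) * t)) + (1 - l / a) / 2 * exp (-((l + a) * t)) := by
  have hminus : exp (-((l - a) * t)) = exp (-l * t) * exp (t * a) := by
    rw [← exp_add]; ring_nf
  have hplus : exp (-((l + a) * t)) = exp (-l * t) * exp (-(t * a)) := by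
    rw [← exp_add]; ring_nf
  rw [hminus, hplus, cosh_eq, sinh_eq]
  ring

lemma tendsto_exp_neg_mul_mul_cosh_add_div_mul_sinh {α : Type*} {L : Filter α} {l a : α → ℝ}
    {μ t : ℝ} (ht : 0 ≤ t) (hsum : ∀ᶠ x in L, 0 ≤ l x + a x)
    (hratio : Tendsto (fun x => l x / a x) L (𝓝 1)) (hdiff : Tendsto (fun x => l x - a x) L (𝓝 μ)) :
    Tendsto (fun x => exp (-l x * t) * (cosh (t * a x) + l x / a x * sinh (t * a x))) L
      (𝓝 (exp (-(μ * t)))) := by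
  simp only [exp_neg_mul_mul_cosh_add_div_mul_sinh]
  have hmain : Tendsto (fun x => (1 + l x / a x) / 2 * exp (-((l x - a x) * t))) L
      (𝓝 (exp (-(μ * t)))) := by
    have := (((tendsto_const_nhds (x := (1 : ℝ))).add hratio).div_const 2).mul
      ((continuous_exp.tendsto _).comp (hdiff.mul_const t).neg)
    simpa using this
  have hdecay : IsBoundedUnder (· ≤ ·) L ((‖·‖) ∘ fun x => exp (-((l x + a x) * t))) := by
    refine isBoundedUnder_of_eventually_le (a := 1) ?_
    filter_upwards [hsum] with x hx
    simpa [abs_of_pos (exp_pos _)] using mul_nonneg hx ht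
  have hrest : Tendsto (fun x => (1 - l x / a x) / 2 * exp (-((l x + a x) * t))) L (𝓝 0) := by
    refine Tendsto.zero_mul_isBoundedUnder_le ?_ hdecay
    simpa using ((tendsto_const_nhds (x := (1 : ℝ))).sub hratio).div_const 2
  simpa using hmain.add hrest

section SqrtAsymptotics

variable {α : Type*} {L : Filter α} {l s : α → ℝ} {σ : ℝ}

lemma tendsto_div_sq_of_tendsto_div_s16 (hl : Tendsto l L atTop)
    (hs : Tendsto (fun x => s x / l x) L (𝓝 σ)) : Tendsto (fun x => s x / l x ^ 2) L (𝓝 0) := by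
  have := hs.mul hl.inv_tendsto_atTop
  rw [mul_zero] at this
  refine this.congr fun x => ?_
  simp only [Pi.inv_apply]
  ring

lemma eventually_lt_sq_of_tendsto_div (hl : Tendsto l L atTop)
    (hs : Tendsto (fun x => s x / l x) L (𝓝 σ)) : ∀ᶠ x in L, s x < l x ^ 2 := by
  filter_upwards [(tendsto_div_sq_of_tendsto_div_s16 hl hs).eventually_lt_const one_pos,
    hl.eventually_gt_atTop 0] with x hx hlx
  exact (div_lt_one (by positivity)).mp hx

lemma tendsto_sqrt_sq_sub_div_self_s16 (hl : Tendsto l L atTop)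
    (hs : Tendsto (fun x => s x / l x) L (𝓝 σ)) :
    Tendsto (fun x => √(l x ^ 2 - s x) / l x) L (𝓝 1) := by
  have := ((tendsto_const_nhds (x := (1 : ℝ))).sub (tendsto_div_sq_of_tendsto_div_s16 hl hs)).sqrt
  rw [sub_zero, sqrt_one] at this
  refine this.congr' ?_
  filter_upwards [hl.eventually_gt_atTop 0] with x hx
  rw [one_sub_div (by positivity), sqrt_div' _ (by positivity), sqrt_sq hx.le]

lemma tendsto_sub_sqrt_sq_sub (hl : Tendsto l L atTop)
    (hs : Tendsto (fun x => s x / l x) L (𝓝 σ)) :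
    Tendsto (fun x => l x - √(l x ^ 2 - s x)) L (𝓝 (σ / 2)) := by
  have := hs.div ((tendsto_const_nhds (x := (1 : ℝ))).add (tendsto_sqrt_sq_sub_div_self_s16 hl hs))
    (by norm_num)
  rw [one_add_one_eq_two] at this
  refine this.congr' ?_
  filter_upwards [eventually_lt_sq_of_tendsto_div hl hs, hl.eventually_gt_atTop 0] with x hlt hx
  -- `l - a = (s / l) / (1 + a / l)` for `a = √(l² - s)`, because `(l - a)(l + a) = s`
  have hsq : √(l x ^ 2 - s x) ^ 2 = l x ^ 2 - s x := sq_sqrt (by linarith)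
  simp only [Pi.div_apply]
  field_simp
  linear_combination hsq

end SqrtAsymptotics

lemma Htilde_of_sq_lt {l c ξ : ℝ} (t : ℝ) (hl : 0 < l) (hc : 0 < c) (h : c ^ 2 * ξ ^ 2 < l ^ 2) :
    Htilde l c ξ t = cosh (t * √(l ^ 2 - c ^ 2 * ξ ^ 2)) +
      l / √(l ^ 2 - c ^ 2 * ξ ^ 2) * sinh (t * √(l ^ 2 - c ^ 2 * ξ ^ 2)) := by
  refine if_pos ((lt_div_iff₀ hc).mpr (lt_of_pow_lt_pow_left₀ 2 hl.le ?_))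
  rwa [mul_pow, sq_abs, mul_comm]

theorem stmt_16_general (lam c : ℕ → ℝ) (ϱ : ℝ)
    (hlam : Tendsto lam atTop atTop) (hc : Tendsto c atTop atTop)
    (hKac : Tendsto (fun m => (c m) ^ 2 / lam m) atTop (nhds ϱ))
    (β t : ℝ) (ht : 0 ≤ t) :
    Tendsto (fun m => Real.exp (-(lam m) * t) * Htilde (lam m) (c m) β t) atTop
      (nhds (Real.exp (-(ϱ * β ^ 2 * t / 2)))) := by
  have hs : Tendsto (fun m => c m ^ 2 * β ^ 2 / lam m) atTop (𝓝 (ϱ * β ^ 2)) :=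
    (hKac.mul_const _).congr fun m => by ring
  have hsum : ∀ᶠ m in atTop, 0 ≤ lam m + √(lam m ^ 2 - c m ^ 2 * β ^ 2) := by
    filter_upwards [hlam.eventually_ge_atTop 0] with m hm
    positivity
  have hlim := tendsto_exp_neg_mul_mul_cosh_add_div_mul_sinh ht hsum
    (by simpa using (tendsto_sqrt_sq_sub_div_self_s16 hlam hs).inv₀ one_ne_zero)
    (tendsto_sub_sqrt_sq_sub hlam hs)
  rw [show ϱ * β ^ 2 * t / 2 = ϱ * β ^ 2 / 2 * t by ring]
  refine hlim.congr' ?_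
  filter_upwards [eventually_lt_sq_of_tendsto_div hlam hs, hlam.eventually_gt_atTop 0,
    hc.eventually_gt_atTop 0] with m hlt hlm hcm
  rw [Htilde_of_sq_lt t hlm hcm hlt]

/-- Kac's diffusion limit of the characteristic function of a single Goldstein–Kac telegraph
process: under Kac's scaling (`λₘ → +∞`, `cₘ → +∞`, `cₘ²/λₘ → ϱ > 0`), for fixed `β ∈ ℝ`
and `t ≥ 0`, `exp(−λₘt)·H̃(λₘ, cₘ, β, t) → exp(−ϱβ²t/2)`, the characteristic function of
Brownian motion with diffusion coefficient `ϱ`. -/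
theorem stmt_16 (lam c : ℕ → ℝ) (ϱ : ℝ) (hϱ : 0 < ϱ)
    (hlam_pos : ∀ m, 0 < lam m) (hc_pos : ∀ m, 0 < c m)
    (hlam : Tendsto lam atTop atTop) (hc : Tendsto c atTop atTop)
    (hKac : Tendsto (fun m => (c m) ^ 2 / lam m) atTop (nhds ϱ))
    (β t : ℝ) (ht : 0 ≤ t) :
    Tendsto (fun m => Real.exp (-(lam m) * t) * Htilde (lam m) (c m) β t) atTop
      (nhds (Real.exp (-(ϱ * β ^ 2 * t / 2)))) :=
  stmt_16_general lam c ϱ hlam hc hKac β t ht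
end
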